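/- Let X and Y be finite simple graphs and let G be a subgroup of the automorphism group of Y that acts transitively on V(Y); set n = |G| and r = |G|/|V(Y)| (an integer). Then there is a graph homomorphism from X to Y if and only if there is a graph homomorphism from X ⋉ Y to the Kneser graph K_{n:r}; and there is a quantum homomorphism from X to Y if and only if there is a quantum homomorphism from X ⋉ Y to K_{n:r}. -/

import Mathlib

/-!
For `u, w ∈ V(Y)` let `S(u, w) ⊆ G` be the set of `g` with `g u = w`; by transitivity these sets
all have `|G| / |V(Y)| = r` elements. For fixed `u` they are disjoint, and for `u ~ u'`, `w ≁ w'`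
the sets `S(u, w)` and `S(u', w')` are disjoint because `G` preserves adjacency. Hence
`(u, w) ↦ S(u, w)` is a homomorphism `Y ⋉ Y → K_{n:r}`, and composing it with the map
`X ⋉ Y → Y ⋉ Y` induced by a (quantum) homomorphism `X → Y` gives `X ⋉ Y → K_{n:r}`.

Conversely, given `X ⋉ Y → K_{n:r}`, the `|V(Y)|` sets attached to `(x, w)`, `w ∈ V(Y)`, are
pairwise disjoint `r`-subsets of an `n`-set, so exactly one of them contains a fixed point `j`;
sending `x` to that `w` is a homomorphism `X → Y`. In the quantum case the projections
`∑_{s ∋ j} F (x, w) s` play this role: summed over `w` they give projections `Q_j` with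
`∑_j Q_j = n • 1`, so the nonnegative elements `1 - Q_j` sum to `0` and every `Q_j` is `1`.

Both equivalences are proved at once for projections in any star-ordered ring: matrix algebras
give quantum homomorphisms and `ℝ` gives graph homomorphisms.
-/

open Matrix Finset

/-- A quantum homomorphism from `X` to `Y`: for some `d ≥ 1` there are complex `d × d`
projectors `E x y` (Hermitian idempotents) with `∑ y, E x y = 1` for every `x`,
`E x y * E x y' = 0` whenever `y ≠ y'`, and `E x y * E x' y' = 0` whenever `x, x'`
are adjacent in `X` and `y, y'` are equal or nonadjacent in `Y`. -/
def IsQuantumHom {V W : Type} [Fintype V] [Fintype W]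
    (X : SimpleGraph V) (Y : SimpleGraph W) : Prop :=
  ∃ d : ℕ, 0 < d ∧ ∃ E : V → W → Matrix (Fin d) (Fin d) ℂ,
    (∀ x y, (E x y).IsHermitian ∧ E x y * E x y = E x y) ∧
    (∀ x, ∑ y, E x y = 1) ∧
    (∀ x y y', y ≠ y' → E x y * E x y' = 0) ∧
    (∀ x x' y y', X.Adj x x' → ¬ Y.Adj y y' → E x y * E x' y' = 0)

/-- The homomorphic product `X ⋉ Y`: distinct vertices `(x,y)` and `(x',y')` are adjacent
iff `x = x'`, or (`x ~ x'` in `X` and `y, y'` are equal or nonadjacent in `Y`). -/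
def homProd {V W : Type} (X : SimpleGraph V) (Y : SimpleGraph W) :
    SimpleGraph (V × W) where
  Adj a b := a ≠ b ∧ (a.1 = b.1 ∨ (X.Adj a.1 b.1 ∧ ¬ Y.Adj a.2 b.2))
  symm := ⟨by
    rintro a b ⟨hne, h⟩
    refine ⟨hne.symm, ?_⟩
    rcases h with h | ⟨h1, h2⟩
    · exact Or.inl h.symm
    · exact Or.inr ⟨h1.symm, fun hb => h2 hb.symm⟩⟩
  loopless := ⟨fun a ha => ha.1 rfl⟩

/-- The independence number: the largest size of a set of pairwise nonadjacent vertices. -/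
noncomputable def indepNum {U : Type} [Fintype U] (Z : SimpleGraph U) : ℕ :=
  sSup {n | ∃ s : Finset U, s.card = n ∧ ∀ a ∈ s, ∀ b ∈ s, a ≠ b → ¬ Z.Adj a b}


/-- The Kneser graph `K_{n:r}`: vertices are the `r`-element subsets of `{1,…,n}`,
two distinct subsets being adjacent iff they are disjoint. -/
def kneser (n r : ℕ) : SimpleGraph {s : Finset (Fin n) // s.card = r} where
  Adj s t := s ≠ t ∧ Disjoint s.1 t.1
  symm := ⟨fun s t ⟨hne, hd⟩ => ⟨hne.symm, hd.symm⟩⟩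
  loopless := ⟨fun s hs => hs.1 rfl⟩

theorem Finset.sum_mul_sum_eq_zero {ι κ R : Type*} [NonUnitalNonAssocSemiring R] {s : Finset ι}
    {t : Finset κ} {f : ι → R} {g : κ → R} (h : ∀ i ∈ s, ∀ j ∈ t, f i * g j = 0) :
    (∑ i ∈ s, f i) * ∑ j ∈ t, g j = 0 := by
  rw [Finset.sum_mul_sum]
  exact Finset.sum_eq_zero fun i hi => Finset.sum_eq_zero fun j hj => h i hi j hj

section StarProjection

variable {ι R : Type*}

theorem IsStarProjection.sum [NonUnitalSemiring R] [StarRing R] {s : Finset ι} {p : ι → R}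
    (hp : ∀ i ∈ s, IsStarProjection (p i))
    (horth : ∀ i ∈ s, ∀ j ∈ s, i ≠ j → p i * p j = 0) :
    IsStarProjection (∑ i ∈ s, p i) := by
  classical
  induction s using Finset.induction_on with
  | empty => simp
  | insert a s ha ih =>
    rw [Finset.sum_insert ha, Finset.forall_mem_insert] at *
    refine hp.1.add (ih hp.2 fun i hi j hj => horth.2 i hi j (mem_insert_of_mem hj)) ?_
    rw [Finset.mul_sum]
    exact Finset.sum_eq_zero fun j hj =>
      horth.1 j (mem_insert_of_mem hj) (ne_of_mem_of_not_mem hj ha).symm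

theorem eq_one_of_sum_eq_card_nsmul_one [Ring R] [PartialOrder R] [StarRing R]
    [StarOrderedRing R] {s : Finset ι} {p : ι → R} (hp : ∀ i ∈ s, IsStarProjection (p i))
    (hsum : ∑ i ∈ s, p i = #s • 1) : ∀ i ∈ s, p i = 1 := by
  have h : ∑ i ∈ s, (1 - p i) = 0 := by
    rw [Finset.sum_sub_distrib, hsum, Finset.sum_const, sub_self]
  intro i hi
  refine (sub_eq_zero.1 ?_).symm
  exact (Finset.sum_eq_zero_iff_of_nonneg fun j hj => (hp j hj).one_sub.nonneg).1 h i hi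

end StarProjection

section HomProd

variable {V W : Type} {X : SimpleGraph V} {Y : SimpleGraph W}

theorem homProd_adj_of_ne {x : V} {w w' : W} (h : w ≠ w') :
    (homProd X Y).Adj (x, w) (x, w') :=
  ⟨fun hp => h (congrArg Prod.snd hp), Or.inl rfl⟩

theorem homProd_adj_of_adj {x x' : V} {w w' : W} (hx : X.Adj x x') (hw : ¬ Y.Adj w w') :
    (homProd X Y).Adj (x, w) (x', w') :=
  ⟨fun hp => hx.ne (congrArg Prod.fst hp), Or.inr ⟨hx, hw⟩⟩

end HomProd

theorem kneser_adj_iff {n r : ℕ} {s t : {s : Finset (Fin n) // s.card = r}} (hr : r ≠ 0) :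
    (kneser n r).Adj s t ↔ Disjoint s.1 t.1 := by
  refine ⟨And.right, fun h => ⟨?_, h⟩⟩
  rintro rfl
  exact hr (s.2 ▸ by simpa using disjoint_self.1 h)

theorem sum_sum_mem_eq_nsmul_sum {n r : ℕ} {M : Type*} [AddCommMonoid M]
    (f : {s : Finset (Fin n) // s.card = r} → M) :
    ∑ j, ∑ s with j ∈ s.1, f s = r • ∑ s, f s := by
  calc ∑ j, ∑ s with j ∈ s.1, f s = ∑ s, ∑ _j ∈ s.1, f s := Finset.sum_comm' (by simp)
    _ = r • ∑ s, f s := by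
      rw [Finset.smul_sum]
      exact Finset.sum_congr rfl fun s _ => by rw [Finset.sum_const, s.2]

structure IsQuantumHomFamily {V W R : Type*} [Fintype W] [Semiring R] [Star R]
    (X : SimpleGraph V) (Y : SimpleGraph W) (E : V → W → R) : Prop where
  isStarProjection : ∀ x y, IsStarProjection (E x y)
  sum_eq_one : ∀ x, ∑ y, E x y = 1
  mul_eq_zero_of_ne : ∀ x y y', y ≠ y' → E x y * E x y' = 0
  mul_eq_zero_of_adj : ∀ x x' y y', X.Adj x x' → ¬ Y.Adj y y' → E x y * E x' y' = 0

namespace IsQuantumHomFamily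

variable {V W U R : Type} [Fintype W] [Ring R] [StarRing R]
  {X : SimpleGraph V} {Y : SimpleGraph W} {E : V → W → R}

theorem isStarProjection_sum (hE : IsQuantumHomFamily X Y E) (x : V) (t : Finset W) :
    IsStarProjection (∑ y ∈ t, E x y) :=
  IsStarProjection.sum (fun y _ => hE.isStarProjection x y)
    fun y _ y' _ hne => hE.mul_eq_zero_of_ne x y y' hne

theorem comp_hom [Fintype U] [DecidableEq U] {Z : SimpleGraph U}
    (hE : IsQuantumHomFamily X Y E) (φ : Y →g Z) :
    IsQuantumHomFamily X Z fun x z => ∑ y with φ y = z, E x y where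
  isStarProjection x _ := hE.isStarProjection_sum x _
  sum_eq_one x := (Finset.sum_fiberwise _ _ _).trans (hE.sum_eq_one x)
  mul_eq_zero_of_ne x z z' hne := Finset.sum_mul_sum_eq_zero fun y hy y' hy' =>
    hE.mul_eq_zero_of_ne x y y' fun h => hne <| by
      rw [← (Finset.mem_filter.1 hy).2, ← (Finset.mem_filter.1 hy').2, h]
  mul_eq_zero_of_adj x x' z z' hx hz := Finset.sum_mul_sum_eq_zero fun y hy y' hy' =>
    hE.mul_eq_zero_of_adj x x' y y' hx fun hy'' => hz <| by
      rw [← (Finset.mem_filter.1 hy).2, ← (Finset.mem_filter.1 hy').2]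
      exact φ.map_adj hy''

theorem homProd_map [Fintype U] [DecidableEq U] (hE : IsQuantumHomFamily X Y E)
    (Z : SimpleGraph U) :
    IsQuantumHomFamily (homProd X Z) (homProd Y Z)
      fun p q => if q.2 = p.2 then E p.1 q.1 else 0 where
  isStarProjection p q := by
    split_ifs
    exacts [hE.isStarProjection _ _, .zero R]
  sum_eq_one p := by simp [Fintype.sum_prod_type, hE.sum_eq_one]
  mul_eq_zero_of_ne p q q' hne := by
    split_ifs with hq hq'
    · exact hE.mul_eq_zero_of_ne _ _ _ fun h => hne (Prod.ext h (hq.trans hq'.symm))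
    all_goals simp
  mul_eq_zero_of_adj := by
    rintro ⟨x, z⟩ ⟨x', z'⟩ ⟨y, u⟩ ⟨y', u'⟩ ⟨hne, hadj⟩ hnadj
    split_ifs with hu hu'
    · dsimp only at hu hu' hnadj ⊢
      subst hu hu'
      rcases hadj with rfl | ⟨hx, hz⟩
      · exact hE.mul_eq_zero_of_ne _ _ _ fun hy =>
          hnadj ⟨fun h => hne (congrArg (Prod.mk x) (congrArg Prod.snd h)), Or.inl hy⟩
      · exact hE.mul_eq_zero_of_adj _ _ _ _ hx fun hy => hnadj (homProd_adj_of_adj hy hz)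
    all_goals simp

theorem exists_eq_one [IsDomain R] (hE : IsQuantumHomFamily X Y E) (x : V) :
    ∃ y, E x y = 1 := by
  obtain ⟨y, -, hy⟩ := Finset.exists_ne_zero_of_sum_ne_zero (s := Finset.univ)
    ((hE.sum_eq_one x).symm ▸ one_ne_zero)
  exact ⟨y, (IsIdempotentElem.iff_eq_zero_or_one.1 (hE.isStarProjection x y).isIdempotentElem)
    |>.resolve_left hy⟩

theorem sum_mem_mul_sum_mem_eq_zero {P : Type} {Z : SimpleGraph P} {n r : ℕ}
    {F : P → {s : Finset (Fin n) // s.card = r} → R} (hF : IsQuantumHomFamily Z (kneser n r) F)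
    (j : Fin n) {p q : P} (h : Z.Adj p q) :
    (∑ s with j ∈ s.1, F p s) * ∑ s with j ∈ s.1, F q s = 0 :=
  Finset.sum_mul_sum_eq_zero fun s hs t ht => hF.mul_eq_zero_of_adj p q s t h fun hst =>
    Finset.disjoint_left.1 hst.2 (Finset.mem_filter.1 hs).2 (Finset.mem_filter.1 ht).2

theorem of_homProd_kneser [PartialOrder R] [StarOrderedRing R] {n r : ℕ}
    {F : V × W → {s : Finset (Fin n) // s.card = r} → R}
    (hF : IsQuantumHomFamily (homProd X Y) (kneser n r) F) (hcard : Fintype.card W * r = n)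
    (j : Fin n) :
    IsQuantumHomFamily X Y fun x w => ∑ s with j ∈ s.1, F (x, w) s where
  isStarProjection x w := hF.isStarProjection_sum (x, w) _
  mul_eq_zero_of_ne _ _ _ hw := hF.sum_mem_mul_sum_mem_eq_zero j (homProd_adj_of_ne hw)
  mul_eq_zero_of_adj _ _ _ _ hx hw :=
    hF.sum_mem_mul_sum_mem_eq_zero j (homProd_adj_of_adj hx hw)
  sum_eq_one x := by
    have hproj (i : Fin n) : IsStarProjection (∑ w, ∑ s with i ∈ s.1, F (x, w) s) :=
      IsStarProjection.sum (fun w _ => hF.isStarProjection_sum _ _)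
        fun _ _ _ _ hw => hF.sum_mem_mul_sum_mem_eq_zero i (homProd_adj_of_ne hw)
    have htotal : ∑ i, ∑ w, ∑ s with i ∈ s.1, F (x, w) s = #(univ : Finset (Fin n)) • 1 := by
      simp only [Finset.sum_comm (s := (univ : Finset (Fin n))), sum_sum_mem_eq_nsmul_sum,
        hF.sum_eq_one, Finset.sum_const, Finset.card_univ, smul_smul, Fintype.card_fin, hcard]
    exact eq_one_of_sum_eq_card_nsmul_one (fun i _ => hproj i) htotal j (mem_univ j)

end IsQuantumHomFamily

section QuantumHomFamily

variable {V W R : Type} [Fintype W] [Ring R] [StarRing R] {X : SimpleGraph V} {Y : SimpleGraph W}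

theorem nonempty_hom_iff_exists_quantumHomFamily [IsDomain R] [DecidableEq W] :
    Nonempty (X →g Y) ↔ ∃ E : V → W → R, IsQuantumHomFamily X Y E := by
  constructor
  · rintro ⟨f⟩
    refine ⟨fun x y => if f x = y then 1 else 0, ⟨?_, ?_, ?_, ?_⟩⟩
    · intro x y
      split_ifs
      exacts [.one R, .zero R]
    · simp
    · intro x y y' hne
      split_ifs with h h'
      · exact absurd (h.symm.trans h') hne
      all_goals simp
    · intro x x' y y' hx hy
      split_ifs with h h'
      · exact absurd (h ▸ h' ▸ f.map_adj hx) hy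
      all_goals simp
  · rintro ⟨E, hE⟩
    choose f hf using hE.exists_eq_one
    refine ⟨⟨f, fun {x x'} hx => ?_⟩⟩
    by_contra hy
    simpa [hf] using hE.mul_eq_zero_of_adj x x' _ _ hx hy

theorem exists_quantumHomFamily_iff_homProd_kneser [PartialOrder R] [StarOrderedRing R]
    {n r : ℕ} (φ : homProd Y Y →g kneser n r) (hcard : Fintype.card W * r = n) (hn : 0 < n) :
    (∃ E : V → W → R, IsQuantumHomFamily X Y E) ↔
      ∃ F : V × W → {s : Finset (Fin n) // s.card = r} → R,
        IsQuantumHomFamily (homProd X Y) (kneser n r) F := by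
  classical
  exact ⟨fun ⟨_, hE⟩ => ⟨_, (hE.homProd_map Y).comp_hom φ⟩,
    fun ⟨_, hF⟩ => ⟨_, hF.of_homProd_kneser hcard ⟨0, hn⟩⟩⟩

end QuantumHomFamily

theorem isQuantumHom_iff {V W : Type} [Fintype V] [Fintype W] {X : SimpleGraph V}
    {Y : SimpleGraph W} :
    IsQuantumHom X Y ↔
      ∃ d, 0 < d ∧ ∃ E : V → W → Matrix (Fin d) (Fin d) ℂ, IsQuantumHomFamily X Y E := by
  have hproj {d : ℕ} (A : Matrix (Fin d) (Fin d) ℂ) :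
      A.IsHermitian ∧ A * A = A ↔ IsStarProjection A := by
    rw [isStarProjection_iff, Matrix.isHermitian_iff_isSelfAdjoint, and_comm]
    rfl
  refine exists_congr fun d => and_congr_right fun _ => exists_congr fun E =>
    ⟨fun ⟨h₁, h₂, h₃, h₄⟩ => ⟨fun x y => (hproj _).1 (h₁ x y), h₂, h₃, h₄⟩, fun hE => ?_⟩
  exact ⟨fun x y => (hproj _).2 (hE.isStarProjection x y), hE.sum_eq_one, hE.mul_eq_zero_of_ne,
    hE.mul_eq_zero_of_adj⟩

section Transporter

open MulAction

variable (G : Type) {α : Type} [Group G] [Fintype G] [MulAction G α] [DecidableEq α]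

def transporter (u w : α) : Finset G := {g | g • u = w}

variable {G}

theorem mem_transporter {u w : α} {g : G} : g ∈ transporter G u w ↔ g • u = w := by
  simp [transporter]

theorem card_transporter_eq [IsPretransitive G α] (u w w' : α) :
    #(transporter G u w) = #(transporter G u w') := by
  obtain ⟨h, rfl⟩ := exists_smul_eq G w w'
  refine Finset.card_nbij' (h * ·) (h⁻¹ * ·) ?_ ?_ ?_ ?_ <;> intro g hg
  · rw [Finset.mem_coe, mem_transporter] at hg ⊢
    rw [mul_smul, hg]
  · rw [Finset.mem_coe, mem_transporter] at hg ⊢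
    rw [mul_smul, hg, inv_smul_smul]
  · exact inv_mul_cancel_left h g
  · exact mul_inv_cancel_left h g

theorem card_mul_card_transporter [Fintype α] [IsPretransitive G α] (u w : α) :
    Fintype.card α * #(transporter G u w) = Fintype.card G := by
  calc Fintype.card α * #(transporter G u w) = ∑ w', #(transporter G u w') := by
        rw [Finset.sum_congr rfl fun w' _ => (card_transporter_eq u w w').symm,
          Finset.sum_const, Finset.card_univ, smul_eq_mul]
    _ = Fintype.card G :=
        (Finset.card_eq_sum_card_fiberwise fun g _ => mem_univ (g • u)).symm

theorem disjoint_transporter_of_ne {u w w' : α} (h : w ≠ w') :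
    Disjoint (transporter G u w) (transporter G u w') :=
  Finset.disjoint_left.2 fun _ hw hw' =>
    h ((mem_transporter.1 hw).symm.trans (mem_transporter.1 hw'))

theorem disjoint_transporter_of_adj {Y : SimpleGraph α}
    (hY : ∀ (g : G) a b, Y.Adj (g • a) (g • b) ↔ Y.Adj a b) {u u' w w' : α}
    (hu : Y.Adj u u') (hw : ¬ Y.Adj w w') :
    Disjoint (transporter G u w) (transporter G u' w') :=
  Finset.disjoint_left.2 fun g hg hg' => hw <| by
    rw [← mem_transporter.1 hg, ← mem_transporter.1 hg']
    exact (hY g u u').2 hu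

theorem nonempty_homProd_self_hom_kneser [Fintype α] [IsPretransitive G α] (Y : SimpleGraph α)
    (hY : ∀ (g : G) a b, Y.Adj (g • a) (g • b) ↔ Y.Adj a b) {r : ℕ}
    (hr : Fintype.card G = r * Fintype.card α) :
    Nonempty (homProd Y Y →g kneser (Fintype.card G) r) := by
  have hpos : 0 < r * Fintype.card α := hr ▸ Fintype.card_pos
  have hcard (u w : α) : #(transporter G u w) = r :=
    Nat.eq_of_mul_eq_mul_left (pos_of_mul_pos_right hpos (Nat.zero_le r))
      (by rw [card_mul_card_transporter, hr, mul_comm])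
  let e := Fintype.equivFin G
  refine ⟨⟨fun p => ⟨(transporter G p.1 p.2).map e.toEmbedding, by rw [card_map, hcard]⟩, ?_⟩⟩
  rintro ⟨u, w⟩ ⟨u', w'⟩ ⟨hne, hadj⟩
  rw [kneser_adj_iff (pos_of_mul_pos_left hpos (Nat.zero_le _)).ne', Finset.disjoint_map]
  rcases hadj with rfl | ⟨hu, hw⟩
  · exact disjoint_transporter_of_ne fun hw => hne (Prod.ext rfl hw)
  · exact disjoint_transporter_of_adj hY hu hw

end Transporter

/-- If `G` is a group of automorphisms of `Y` acting transitively on `V(Y)`,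
with `n = |G|` and `r = |G|/|V(Y)|` an integer, then `X → Y` iff `X ⋉ Y → K_{n:r}`,
and `X →q Y` iff `X ⋉ Y →q K_{n:r}`. -/
theorem hom_iff_homProd_to_kneser {V W : Type} [Fintype V] [Fintype W]
    (X : SimpleGraph V) (Y : SimpleGraph W)
    (G : Subgroup (Equiv.Perm W))
    (hAut : ∀ g ∈ G, ∀ a b : W, Y.Adj (g a) (g b) ↔ Y.Adj a b)
    (hTrans : ∀ u v : W, ∃ g ∈ G, g u = v)
    (r : ℕ) (hr : Nat.card G = r * Fintype.card W) :
    (Nonempty (X →g Y) ↔ Nonempty (homProd X Y →g kneser (Nat.card G) r)) ∧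
    (IsQuantumHom X Y ↔ IsQuantumHom (homProd X Y) (kneser (Nat.card G) r)) := by
  classical
  have := Fintype.ofFinite G
  have : MulAction.IsPretransitive G W :=
    ⟨fun u v => let ⟨g, hg, h⟩ := hTrans u v; ⟨⟨g, hg⟩, h⟩⟩
  have hcard : Fintype.card W * r = Nat.card G := by rw [hr, mul_comm]
  obtain ⟨φ⟩ : Nonempty (homProd Y Y →g kneser (Nat.card G) r) := by
    rw [Nat.card_eq_fintype_card] at hr ⊢
    exact nonempty_homProd_self_hom_kneser Y (fun g => hAut g.1 g.2) hr
  constructor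
  · rw [nonempty_hom_iff_exists_quantumHomFamily (R := ℝ),
      nonempty_hom_iff_exists_quantumHomFamily (R := ℝ)]
    exact exists_quantumHomFamily_iff_homProd_kneser φ hcard Nat.card_pos
  · rw [isQuantumHom_iff, isQuantumHom_iff]
    open scoped MatrixOrder in
    exact exists_congr fun d => and_congr_right fun _ =>
      exists_quantumHomFamily_iff_homProd_kneser φ hcard Nat.card_pos
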